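/- The real submanifold 𝓜 ⊆ ℂ^4, defined in coordinates (z, w_1, w_2, w_3) by the three equations w_1 − conj(w_1) = 2i z conj(z), w_2 − conj(w_2) = 2i z conj(z)(z + conj(z)), and w_3 − conj(w_3) = 2i z conj(z)(z² + (3/2) z conj(z) + conj(z)²), is homogeneous: for every point (p, q_1, q_2, q_3) ∈ 𝓜 there exists a map Φ : ℂ^4 → ℂ^4 whose components are holomorphic polynomials, which is bijective with inverse also given by holomorphic polynomials, and which satisfies Φ(0,0,0,0) = (p, q_1, q_2, q_3) and Φ(𝓜) = 𝓜. -/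

import Mathlib

/-!
STATEMENT 12: the real submanifold 𝓜 ⊆ ℂ⁴ defined by
  w₁ − w̄₁ = 2i z z̄,
  w₂ − w̄₂ = 2i z z̄ (z + z̄),
  w₃ − w̄₃ = 2i z z̄ (z² + (3/2) z z̄ + z̄²)
is homogeneous: every point of 𝓜 is the image of the origin under a polynomial
biholomorphism of ℂ⁴ (with polynomial inverse) preserving 𝓜.
-/

open MvPolynomial Complex

noncomputable section

/-- Points of ℂ⁴ in coordinates (z, w₁, w₂, w₃): coordinate 0 is z, coordinates 1, 2, 3
are w₁, w₂, w₃. -/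
abbrev Pt := Fin 4 → ℂ

/-- The CR-manifold 𝓜 ⊆ ℂ⁴. -/
def Mcal : Set Pt :=
  {p | p 1 - starRingEnd ℂ (p 1) = 2 * I * p 0 * starRingEnd ℂ (p 0) ∧
       p 2 - starRingEnd ℂ (p 2) =
         2 * I * p 0 * starRingEnd ℂ (p 0) * (p 0 + starRingEnd ℂ (p 0)) ∧
       p 3 - starRingEnd ℂ (p 3) =
         2 * I * p 0 * starRingEnd ℂ (p 0) *
           ((p 0) ^ 2 + (3 / 2 : ℂ) * p 0 * starRingEnd ℂ (p 0) +
             (starRingEnd ℂ (p 0)) ^ 2)}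

/-- The map ℂ⁴ → ℂ⁴ whose components are given by the four polynomials `P i`. -/
def polyMap (P : Fin 4 → MvPolynomial (Fin 4) ℂ) : Pt → Pt :=
  fun x i => eval x (P i)

/-!
The point `q ∈ 𝓜` is reached from the origin by `Φ = translate I q̄₀ q`: it moves `z` by
`a = q 0` and corrects each `wₖ` by the part of `2i φₖ(z + a, z̄ + ā)` that is holomorphic in `z`,
together with multiples of the lower `wⱼ`, where `2i φₖ` is the right-hand side of the `k`-th
equation. With `ρₖ = wₖ - w̄ₖ - 2i φₖ` the defining functions (`defectₖ`), this makes
`ρ ∘ Φ = L ρ + ρ(q)` for a unipotent lower triangular `L`, so that `Φ x ∈ 𝓜 ↔ x ∈ 𝓜` once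
`q ∈ 𝓜`. The map is itself triangular with unit diagonal in `(z, w₁, w₂, w₃)`, hence has a
polynomial inverse.
-/

open ComplexConjugate

namespace Mcal

section Translate

variable {R : Type*} [CommRing R]

/-- The translation of `𝓜` taking the origin to `q`, written over an arbitrary commutative ring so
that it can be evaluated both at points of `ℂ⁴` and at the generic point `X` of the polynomial ring.
Over `ℂ` one takes `i = I` and `b = conj (q 0)`. -/
def translate (i b : R) (q x : Fin 4 → R) : Fin 4 → R :=
  let a := q 0
  ![x 0 + a,
    x 1 + 2 * i * b * x 0 + q 1,
    x 2 + 2 * i * b * x 0 ^ 2 + (4 * i * a * b + 2 * i * b ^ 2) * x 0 + 2 * (a + b) * x 1 + q 2,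
    x 3 + 2 * i * b * x 0 ^ 3 + (3 * i * b ^ 2 + 6 * i * a * b) * x 0 ^ 2
      + (2 * i * b ^ 3 + 6 * i * a * b ^ 2 + 6 * i * a ^ 2 * b) * x 0
      + 3 * (a + b) ^ 2 * x 1 + 3 * (a + b) * x 2 + q 3]

def translateInv (i b : R) (q y : Fin 4 → R) : Fin 4 → R :=
  let a := q 0
  let x₀ := y 0 - a
  let x₁ := y 1 - 2 * i * b * x₀ - q 1
  let x₂ := y 2 - 2 * i * b * x₀ ^ 2 - (4 * i * a * b + 2 * i * b ^ 2) * x₀ - 2 * (a + b) * x₁ - q 2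
  let x₃ := y 3 - 2 * i * b * x₀ ^ 3 - (3 * i * b ^ 2 + 6 * i * a * b) * x₀ ^ 2
      - (2 * i * b ^ 3 + 6 * i * a * b ^ 2 + 6 * i * a ^ 2 * b) * x₀
      - 3 * (a + b) ^ 2 * x₁ - 3 * (a + b) * x₂ - q 3
  ![x₀, x₁, x₂, x₃]

variable (i b : R) (q : Fin 4 → R)

theorem translate_translateInv (y : Fin 4 → R) : translate i b q (translateInv i b q y) = y := by
  funext k
  fin_cases k <;>
    simp only [translate, translateInv, Matrix.cons_val_zero, Matrix.cons_val_one, Matrix.cons_val,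
      Fin.isValue, Fin.reduceFinMk, Fin.zero_eta, Fin.mk_one] <;>
    ring

theorem translateInv_translate (x : Fin 4 → R) : translateInv i b q (translate i b q x) = x := by
  funext k
  fin_cases k <;>
    simp only [translate, translateInv, Matrix.cons_val_zero, Matrix.cons_val_one, Matrix.cons_val,
      Fin.isValue, Fin.reduceFinMk, Fin.zero_eta, Fin.mk_one] <;>
    ring

theorem translate_zero : translate i b q 0 = q := by
  funext k
  fin_cases k <;> simp [translate]

theorem map_translate {S : Type*} [CommRing S] (f : R →+* S) (x : Fin 4 → R) :
    f ∘ translate i b q x = translate (f i) (f b) (f ∘ q) (f ∘ x) := by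
  funext k
  fin_cases k <;> simp [translate, map_ofNat]

theorem map_translateInv {S : Type*} [CommRing S] (f : R →+* S) (y : Fin 4 → R) :
    f ∘ translateInv i b q y = translateInv (f i) (f b) (f ∘ q) (f ∘ y) := by
  funext k
  fin_cases k <;> simp [translateInv, map_ofNat]

end Translate

theorem polyMap_translate (b : ℂ) (q : Pt) :
    polyMap (translate (C I) (C b) (C ∘ q) X) = translate I b q := by
  funext x
  exact (map_translate _ _ _ (eval x) X).trans (by simp [Function.comp_def])

theorem polyMap_translateInv (b : ℂ) (q : Pt) :
    polyMap (translateInv (C I) (C b) (C ∘ q) X) = translateInv I b q := by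
  funext x
  exact (map_translateInv _ _ _ (eval x) X).trans (by simp [Function.comp_def])

def defect₁ (x : Pt) : ℂ :=
  x 1 - conj (x 1) - 2 * I * x 0 * conj (x 0)

def defect₂ (x : Pt) : ℂ :=
  x 2 - conj (x 2) - 2 * I * x 0 * conj (x 0) * (x 0 + conj (x 0))

def defect₃ (x : Pt) : ℂ :=
  x 3 - conj (x 3) -
    2 * I * x 0 * conj (x 0) * (x 0 ^ 2 + (3 / 2 : ℂ) * x 0 * conj (x 0) + conj (x 0) ^ 2)

theorem mem_iff_defect (x : Pt) : x ∈ Mcal ↔ defect₁ x = 0 ∧ defect₂ x = 0 ∧ defect₃ x = 0 := by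
  simp only [Mcal, Set.mem_ofPred_eq, defect₁, defect₂, defect₃, sub_eq_zero]

section Defect

variable (q x : Pt)

theorem defect₁_translate : defect₁ (translate I (conj (q 0)) q x) = defect₁ x + defect₁ q := by
  simp only [defect₁, translate, Matrix.cons_val_zero, Matrix.cons_val_one, Fin.isValue, map_add,
    map_mul, map_ofNat, conj_I, conj_conj]
  ring

theorem defect₂_translate :
    defect₂ (translate I (conj (q 0)) q x) =
      defect₂ x + 2 * (q 0 + conj (q 0)) * defect₁ x + defect₂ q := by
  simp only [defect₁, defect₂, translate, Matrix.cons_val_zero, Matrix.cons_val, Fin.isValue,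
    map_add, map_mul, map_pow, map_ofNat, conj_I, conj_conj]
  ring

theorem defect₃_translate :
    defect₃ (translate I (conj (q 0)) q x) = defect₃ x + 3 * (q 0 + conj (q 0)) ^ 2 * defect₁ x
      + 3 * (q 0 + conj (q 0)) * defect₂ x + defect₃ q := by
  simp only [defect₁, defect₂, defect₃, translate, Matrix.cons_val_zero, Matrix.cons_val,
    Fin.isValue, map_add, map_mul, map_pow, map_ofNat, conj_I, conj_conj]
  ring

end Defect

theorem translate_mem_iff {q : Pt} (hq : q ∈ Mcal) (x : Pt) :
    translate I (conj (q 0)) q x ∈ Mcal ↔ x ∈ Mcal := by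
  rw [mem_iff_defect] at hq
  simp only [mem_iff_defect, defect₁_translate, defect₂_translate, defect₃_translate, hq.1, hq.2.1,
    hq.2.2, add_zero]
  constructor <;> rintro ⟨h₁, h₂, h₃⟩ <;> simp_all

end Mcal

open Mcal

theorem stmt12 :
    ∀ p ∈ Mcal, ∃ P Q : Fin 4 → MvPolynomial (Fin 4) ℂ,
      -- `polyMap P` is bijective, with inverse the polynomial map `polyMap Q` :
      (polyMap P) ∘ (polyMap Q) = id ∧
      (polyMap Q) ∘ (polyMap P) = id ∧
      -- it maps the origin to the point p :
      polyMap P 0 = p ∧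
      -- and it preserves 𝓜 :
      polyMap P '' Mcal = Mcal := by
  intro p hp
  refine ⟨translate (C I) (C (conj (p 0))) (C ∘ p) X,
    translateInv (C I) (C (conj (p 0))) (C ∘ p) X, ?_⟩
  rw [polyMap_translate, polyMap_translateInv]
  have hright := translate_translateInv I (conj (p 0)) p
  have hpre : translate I (conj (p 0)) p ⁻¹' Mcal = Mcal := Set.ext (translate_mem_iff hp)
  refine ⟨funext hright, funext (translateInv_translate _ _ _), translate_zero _ _ _, ?_⟩
  nth_rw 1 [← hpre]
  exact Set.image_preimage_eq Mcal (Function.RightInverse.surjective hright)
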